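/- In the Lauricella system, the functions F_k(z,δ) = w̄_k ∫_{δ_k} η_z (k = 1,…,n+2) satisfy the linear relation Σ_{k=1}^{n+2} Im(w_k) F_k = 0, where w_k = exp(iπ(μ_0 + ⋯ + μ_{k−1})). Equivalently for the model one-dimensional case n = 0 with μ_0 + μ_1 < 2: ∫ over a closed contour of the multivalued form vanishes, giving Im(w_1)F_1 + Im(w_2)F_2 = 0. -/

import Mathlib

/-!
Both periods are Beta integrals. The substitution `ξ = z₀ + x` on the segment and
`ξ = z₀ + (z₁ - z₀) / t` on the ray give
`F₁ = (z₁ - z₀) ^ (1 - μ₀ - μ₁) · B(1 - μ₀, 1 - μ₁)` and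
`F₂ = (z₁ - z₀) ^ (1 - μ₀ - μ₁) · B(μ₀ + μ₁ - 1, 1 - μ₁)`.
Writing `B` through `Γ`, the relation becomes Euler's reflection formula
`sin (π s) Γ(s) Γ(1 - s) = π`, used at `s = μ₀` and at `s = μ₀ + μ₁ - 1`.
-/

open Real MeasureTheory Set

theorem Real.integral_rpow_mul_sub_rpow {s t a : ℝ} (hs : 0 < s) (ht : 0 < t) (ha : 0 < a) :
    ∫ x in 0..a, x ^ (s - 1) * (a - x) ^ (t - 1) =
      a ^ (s + t - 1) * (Gamma s * Gamma t / Gamma (s + t)) := by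
  have hbeta := Complex.Gamma_mul_Gamma_eq_betaIntegral (s := s) (t := t)
    (by simpa using hs) (by simpa using ht)
  have hG : Complex.Gamma (s + t : ℝ) ≠ 0 := by
    rw [Complex.Gamma_ofReal, Complex.ofReal_ne_zero]
    exact (Gamma_pos_of_pos (add_pos hs ht)).ne'
  apply Complex.ofReal_injective
  rw [intervalIntegral.integral_ofReal.symm]
  have hcongr : EqOn (fun x : ℝ => ((x ^ (s - 1) * (a - x) ^ (t - 1) : ℝ) : ℂ))
      (fun x : ℝ => (x : ℂ) ^ ((s : ℂ) - 1) * ((a : ℂ) - x) ^ ((t : ℂ) - 1)) (uIcc 0 a) := by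
    intro x hx
    rw [uIcc_of_le ha.le] at hx
    push_cast
    rw [Complex.ofReal_cpow hx.1, Complex.ofReal_cpow (sub_nonneg.2 hx.2)]
    push_cast; rfl
  rw [intervalIntegral.integral_congr hcongr, Complex.betaIntegral_scaled s t ha,
    Complex.ofReal_mul, Complex.ofReal_cpow ha.le, Complex.ofReal_div, Complex.ofReal_mul,
    ← Complex.Gamma_ofReal, ← Complex.Gamma_ofReal, ← Complex.Gamma_ofReal, hbeta]
  push_cast
  rw [mul_div_cancel_left₀ _ (by exact_mod_cast hG)]

theorem integral_Ioi_add_eq_integral_Ioo_inv {E : Type*} [NormedAddCommGroup E]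
    [NormedSpace ℝ E] (g : ℝ → E) (a : ℝ) {c : ℝ} (hc : 0 < c) :
    ∫ x in Ioi (a + c), g x = ∫ t in Ioo 0 1, (c / t ^ 2) • g (a + c / t) := by
  have himg : (fun t : ℝ => a + c / t) '' Ioo 0 1 = Ioi (a + c) := by
    ext y
    simp only [mem_image, mem_Ioo, mem_Ioi]
    constructor
    · rintro ⟨t, ⟨ht0, ht1⟩, rfl⟩
      have : c < c / t := by rw [lt_div_iff₀ ht0]; nlinarith
      linarith
    · intro hy
      have hy0 : 0 < y - a := by linarith
      refine ⟨c / (y - a), ⟨div_pos hc hy0, by rw [div_lt_one hy0]; linarith⟩, ?_⟩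
      field_simp
      ring
  have hder : ∀ t ∈ Ioo (0:ℝ) 1, HasDerivAt (fun t : ℝ => a + c / t) (-(c / t ^ 2)) t := by
    intro t ht
    simpa [div_eq_mul_inv, neg_div, mul_div_assoc] using
      ((hasDerivAt_inv ht.1.ne').const_mul c).const_add a
  have hinj : InjOn (fun t : ℝ => a + c / t) (Ioo 0 1) := by
    intro x hx y hy h
    have h' : c / x = c / y := add_left_cancel h
    rw [div_eq_div_iff hx.1.ne' hy.1.ne'] at h'
    exact (mul_left_cancel₀ hc.ne' h').symm
  rw [← himg, integral_image_eq_integral_abs_deriv_smul measurableSet_Ioo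
    (fun t ht => (hder t ht).hasDerivWithinAt) hinj]
  refine setIntegral_congr_fun measurableSet_Ioo (fun t ht => ?_)
  rw [abs_neg, abs_of_pos (by have := ht.1; positivity)]

theorem integral_sub_rpow_mul_sub_rpow {x₀ x₁ α β : ℝ} (h : x₀ < x₁) (hα : α < 1) (hβ : β < 1) :
    ∫ ξ in x₀..x₁, (ξ - x₀) ^ (-α) * (x₁ - ξ) ^ (-β) =
      (x₁ - x₀) ^ (1 - α - β) * (Gamma (1 - α) * Gamma (1 - β) / Gamma (2 - α - β)) := by
  have hshift := intervalIntegral.integral_comp_sub_right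
    (fun x => x ^ (-α) * (x₁ - x₀ - x) ^ (-β)) x₀ (a := x₀) (b := x₁)
  have hbeta := integral_rpow_mul_sub_rpow (s := 1 - α) (t := 1 - β) (by linarith) (by linarith)
    (sub_pos.2 h)
  simp only [sub_self, sub_sub_sub_cancel_right] at hshift
  simp only [sub_sub_cancel_left] at hbeta
  rw [hshift, hbeta]
  ring_nf

theorem integral_Ioi_sub_rpow_mul_sub_rpow {x₀ x₁ α β : ℝ} (h : x₀ < x₁) (hβ : β < 1)
    (hαβ : 1 < α + β) :
    ∫ ξ in Ioi x₁, (ξ - x₀) ^ (-α) * (ξ - x₁) ^ (-β) =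
      (x₁ - x₀) ^ (1 - α - β) * (Gamma (α + β - 1) * Gamma (1 - β) / Gamma α) := by
  obtain ⟨c, hc, rfl⟩ : ∃ c, 0 < c ∧ x₁ = x₀ + c := ⟨x₁ - x₀, sub_pos.2 h, by ring⟩
  have hbeta := integral_rpow_mul_sub_rpow (s := α + β - 1) (t := 1 - β) (a := 1) (by linarith)
    (by linarith) one_pos
  rw [intervalIntegral.integral_of_le zero_le_one, integral_Ioc_eq_integral_Ioo, one_rpow,
    one_mul, show α + β - 1 + (1 - β) = α by ring] at hbeta
  rw [integral_Ioi_add_eq_integral_Ioo_inv _ _ hc, add_sub_cancel_left x₀ c, ← hbeta,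
    ← integral_const_mul]
  refine setIntegral_congr_fun measurableSet_Ioo (fun t ⟨ht0, ht1⟩ => ?_)
  have h1t : 0 ≤ 1 - t := by linarith
  have hshift₀ : x₀ + c / t - x₀ = c * t⁻¹ := by ring
  have hshift₁ : x₀ + c / t - (x₀ + c) = c * (1 - t) * t⁻¹ := by field_simp; ring
  have hinv (y : ℝ) : t⁻¹ ^ (-y) = t ^ y := by rw [inv_rpow ht0.le, rpow_neg ht0.le, inv_inv]
  have hc_pow : c ^ (1 - α - β) = c * c ^ (-α) * c ^ (-β) := by
    rw [show 1 - α - β = 1 + -α + -β by ring, rpow_add hc, rpow_add hc, rpow_one]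
  have ht_pow : t ^ (α + β - 1 - 1) = t ^ α * t ^ β / t ^ 2 := by
    rw [show α + β - 1 - 1 = α + β - 2 by ring, rpow_sub ht0, rpow_add ht0, rpow_two]
  rw [smul_eq_mul, hshift₀, hshift₁, mul_rpow hc.le (inv_nonneg.2 ht0.le),
    mul_rpow (mul_nonneg hc.le h1t) (inv_nonneg.2 ht0.le), mul_rpow hc.le h1t, hinv, hinv,
    hc_pow, ht_pow, show 1 - β - 1 = -β by ring]
  ring

theorem Real.sin_pi_mul_mul_Gamma_mul_Gamma_one_sub {s : ℝ} (hs : 0 < s) (hs1 : s < 1) :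
    sin (π * s) * (Gamma s * Gamma (1 - s)) = π := by
  have hsin : sin (π * s) ≠ 0 :=
    (sin_pos_of_pos_of_lt_pi (by positivity) (by nlinarith [pi_pos])).ne'
  rw [Gamma_mul_Gamma_one_sub, mul_div_cancel₀ _ hsin]

theorem sin_mul_Gamma_div_add_sin_mul_Gamma_div_eq_zero {α β : ℝ} (hα : α ∈ Ioo (0 : ℝ) 1)
    (hβ : β < 1) (hαβ : 1 < α + β) :
    sin (π * α) * (Gamma (1 - α) / Gamma (2 - α - β)) +
      sin (π * (α + β)) * (Gamma (α + β - 1) / Gamma α) = 0 := by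
  set s := α + β - 1 with hs_def
  have hs : 0 < s := by linarith
  have hs1 : s < 1 := by linarith [hα.2]
  have hGα : Gamma α ≠ 0 := (Gamma_pos_of_pos hα.1).ne'
  have hGs : Gamma (1 - s) ≠ 0 := (Gamma_pos_of_pos (by linarith)).ne'
  have hsin : sin (π * (α + β)) = -sin (π * s) := by
    rw [hs_def, mul_sub, mul_one, sin_sub_pi, neg_neg]
  rw [show 2 - α - β = 1 - s by ring, hsin]
  field_simp
  linear_combination sin_pi_mul_mul_Gamma_mul_Gamma_one_sub hα.1 hα.2 -
    sin_pi_mul_mul_Gamma_mul_Gamma_one_sub hs hs1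

theorem stmt14_general (μ₀ μ₁ : ℝ) (hμ₀ : μ₀ ∈ Set.Ioo (0 : ℝ) 1) (hμ₁ : μ₁ ∈ Set.Ioo (0 : ℝ) 1)
    (hlow : 1 < μ₀ + μ₁) (z₀ z₁ : ℝ) (hz : z₀ < z₁) :
    Real.sin (π * μ₀) * (∫ ξ in z₀..z₁, (ξ - z₀) ^ (-μ₀) * (z₁ - ξ) ^ (-μ₁)) +
      Real.sin (π * (μ₀ + μ₁)) * (∫ ξ in Set.Ioi z₁, (ξ - z₀) ^ (-μ₀) * (ξ - z₁) ^ (-μ₁))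
      = 0 := by
  rw [integral_sub_rpow_mul_sub_rpow hz hμ₀.2 hμ₁.2,
    integral_Ioi_sub_rpow_mul_sub_rpow hz hμ₁.2 hlow]
  linear_combination (z₁ - z₀) ^ (1 - μ₀ - μ₁) * Gamma (1 - μ₁) *
    sin_mul_Gamma_div_add_sin_mul_Gamma_div_eq_zero hμ₀ hμ₁.2 hlow

/-- model one-dimensional case `n = 0` of the Lauricella relation
`∑_k Im(w_k) F_k = 0`. For `μ₀, μ₁ ∈ (0,1)` with `1 < μ₀ + μ₁ < 2` (the lower bound
ensuring convergence of the integral over `[z₁, ∞)`), real points `z₀ < z₁`, and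
`w₁ = e^{iπμ₀}`, `w₂ = e^{iπ(μ₀+μ₁)}`, the (real, positively determined) periods
`F₁ = ∫_{z₀}^{z₁} (ξ−z₀)^{−μ₀}(z₁−ξ)^{−μ₁} dξ` and
`F₂ = ∫_{z₁}^{∞} (ξ−z₀)^{−μ₀}(ξ−z₁)^{−μ₁} dξ` satisfy
`Im(w₁) F₁ + Im(w₂) F₂ = 0`. -/
theorem stmt14 (μ₀ μ₁ : ℝ) (hμ₀ : μ₀ ∈ Set.Ioo (0 : ℝ) 1) (hμ₁ : μ₁ ∈ Set.Ioo (0 : ℝ) 1)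
    (hlow : 1 < μ₀ + μ₁) (hhigh : μ₀ + μ₁ < 2) (z₀ z₁ : ℝ) (hz : z₀ < z₁) :
    Real.sin (π * μ₀) * (∫ ξ in z₀..z₁, (ξ - z₀) ^ (-μ₀) * (z₁ - ξ) ^ (-μ₁)) +
      Real.sin (π * (μ₀ + μ₁)) * (∫ ξ in Set.Ioi z₁, (ξ - z₀) ^ (-μ₀) * (ξ - z₁) ^ (-μ₁))
      = 0 :=
  stmt14_general μ₀ μ₁ hμ₀ hμ₁ hlow z₀ z₁ hz
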